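/- arXiv:2602.20205 — 2 statements merged into one kernel-verified Lean document; each statement's English description precedes it below -/
import Mathlib

section
/- Let A be a positive definite symmetric real m×m matrix. For a subset S ⊆ {1,…,m}, let A_S denote the principal submatrix of A indexed by S, with det(A_∅) = 1 by convention. Then the set function h(S) = log det(A_S) is submodular: for all S ⊆ T ⊆ {1,…,m} and i ∉ T, h(S ∪ {i}) − h(S) ≥ h(T ∪ {i}) − h(T). -/
open Matrix

/-- Principal submatrix of `A` indexed by `S`. -/
def principalSub {m : ℕ} (A : Matrix (Fin m) (Fin m) ℝ) (S : Finset (Fin m)) :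
    Matrix {i // i ∈ S} {i // i ∈ S} ℝ :=
  A.submatrix Subtype.val Subtype.val

/-- A principal submatrix of a positive definite matrix is positive definite. -/
lemma principalSub_posDef {m : ℕ} {A : Matrix (Fin m) (Fin m) ℝ}
    (hA : A.PosDef) (S : Finset (Fin m)) : (principalSub A S).PosDef := by
  refine Matrix.PosDef.of_dotProduct_mulVec_pos ?_ ?_
  · have h1 := hA.1
    ext j k
    simpa [principalSub, Matrix.conjTranspose_apply] using congrFun (congrFun h1 j.1) k.1
  · intro x hx
    set y : Fin m → ℝ := fun j => if h : j ∈ S then x ⟨j, h⟩ else 0 with hy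
    have hyx : ∀ j : {i // i ∈ S}, y j.1 = x j := by
      intro j; simp [hy, j.2]
    have hyne : y ≠ 0 := by
      intro h
      apply hx
      funext j
      rw [← hyx j, h]; rfl
    have hpos := hA.dotProduct_mulVec_pos hyne
    have key : dotProduct (star x) (principalSub A S *ᵥ x)
        = dotProduct (star y) (A *ᵥ y) := by
      simp only [star_trivial, dotProduct, Matrix.mulVec, principalSub,
        Matrix.submatrix_apply]
      have inner : ∀ j : Fin m,
          (∑ k : {i // i ∈ S}, A j k.1 * x k) = ∑ k ∈ S, A j k * y k := by
        intro j
        rw [← Finset.sum_coe_sort S (fun k => A j k * y k)]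
        exact Finset.sum_congr rfl fun k _ => by rw [hyx k]
      calc (∑ j : {i // i ∈ S}, x j * ∑ k : {i // i ∈ S}, A j.1 k.1 * x k)
          = ∑ j : {i // i ∈ S}, y j.1 * ∑ k ∈ S, A j.1 k * y k := by
            refine Finset.sum_congr rfl fun j _ => by rw [hyx j, inner]
        _ = ∑ j ∈ S, y j * ∑ k ∈ S, A j k * y k :=
            Finset.sum_coe_sort S (fun j => y j * ∑ k ∈ S, A j k * y k)
        _ = ∑ j : Fin m, y j * ∑ k : Fin m, A j k * y k := by
            rw [Finset.sum_subset (Finset.subset_univ S)]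
            · refine Finset.sum_congr rfl fun j _ => ?_
              congr 1
              rw [Finset.sum_subset (Finset.subset_univ S)]
              intro k _ hk
              simp [hy, hk]
            · intro j _ hj
              simp [hy, hj]
    rw [key]; exact hpos

/-- The scalar `(A ·,i|_S)ᵀ (A_S)⁻¹ (A ·,i|_S)` appearing in the Schur complement. -/
noncomputable def schurF {m : ℕ} (A : Matrix (Fin m) (Fin m) ℝ) (S : Finset (Fin m))
    (i : Fin m) : ℝ :=
  (fun j : {x // x ∈ S} => A j.1 i) ⬝ᵥ ((principalSub A S)⁻¹ *ᵥ fun j : {x // x ∈ S} => A j.1 i)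

def insertEquiv {m : ℕ} (S : Finset (Fin m)) (i : Fin m) (hi : i ∉ S) :
    {x // x ∈ S} ⊕ Unit ≃ {x // x ∈ insert i S} where
  toFun := Sum.elim (fun j => ⟨j.1, Finset.mem_insert_of_mem j.2⟩)
    (fun _ => ⟨i, Finset.mem_insert_self i S⟩)
  invFun := fun j => if h : j.1 ∈ S then Sum.inl ⟨j.1, h⟩ else Sum.inr ()
  left_inv := by
    rintro (j | ⟨⟩)
    · simp [j.2]
    · simp [hi]
  right_inv := by
    rintro ⟨j, hj⟩
    by_cases h : j ∈ S
    · simp [h]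
    · have : j = i := by
        rcases Finset.mem_insert.mp hj with h' | h'
        · exact h'
        · exact absurd h' h
      subst this
      simp [h]

/-- Schur-complement formula for the determinant after inserting one index. -/
lemma det_insert {m : ℕ} {A : Matrix (Fin m) (Fin m) ℝ} (hA : A.PosDef)
    (S : Finset (Fin m)) (i : Fin m) (hi : i ∉ S)
    (hSpd : (principalSub A S).PosDef) :
    (principalSub A (insert i S)).det
      = (principalSub A S).det * (A i i - schurF A S i) := by
  have hsymA : ∀ j k, A j k = A k j := by
    intro j k; exact congrFun (congrFun hA.1.symm j) k
  set AS := principalSub A S with hAS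
  set B : Matrix {x // x ∈ S} Unit ℝ := fun j _ => A j.1 i with hB
  set C : Matrix Unit {x // x ∈ S} ℝ := fun _ j => A i j.1 with hC
  set D : Matrix Unit Unit ℝ := fun _ _ => A i i with hD
  have hsub : (principalSub A (insert i S)).submatrix (insertEquiv S i hi) (insertEquiv S i hi)
      = fromBlocks AS B C D := by
    ext j k
    cases j with
    | inl j => cases k with
      | inl k => rfl
      | inr k => rfl
    | inr j => cases k with
      | inl k => rfl
      | inr k => rfl
  haveI : Invertible AS := AS.invertibleOfIsUnitDet (Ne.isUnit hSpd.det_pos.ne')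
  have hdet : (principalSub A (insert i S)).det = (fromBlocks AS B C D).det := by
    rw [← hsub, Matrix.det_submatrix_equiv_self]
  rw [hdet, Matrix.det_fromBlocks₁₁]
  congr 1
  rw [Matrix.det_unique, Matrix.invOf_eq_nonsing_inv]
  show D default default - (C * AS⁻¹ * B) default default = A i i - schurF A S i
  have hCB : (C * AS⁻¹ * B) default default
      = ∑ j : {x // x ∈ S}, A i j.1 * ((AS⁻¹ *ᵥ fun k : {x // x ∈ S} => A k.1 i) j) := by
    rw [Matrix.mul_assoc]
    simp [Matrix.mul_apply, Matrix.mulVec, dotProduct, hB, hC]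
    rfl
  have hF : schurF A S i
      = ∑ j : {x // x ∈ S}, A j.1 i * ((AS⁻¹ *ᵥ fun k : {x // x ∈ S} => A k.1 i) j) := rfl
  rw [hCB, hF]
  congr 1
  exact Finset.sum_congr rfl fun j _ => by rw [hsymA i j.1]

/-- Variational bound: `2 vᵀw - wᵀBw ≤ vᵀB⁻¹v` for positive definite `B`. -/
lemma quad_bound {n : Type*} [Fintype n] [DecidableEq n] {B : Matrix n n ℝ}
    (hB : B.PosDef) (v w : n → ℝ) :
    2 * (v ⬝ᵥ w) - w ⬝ᵥ (B *ᵥ w) ≤ v ⬝ᵥ (B⁻¹ *ᵥ v) := by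
  set u : n → ℝ := B⁻¹ *ᵥ v with hu
  have hinv : B * B⁻¹ = 1 := Matrix.mul_nonsing_inv B (Ne.isUnit hB.det_pos.ne')
  have hBu : B *ᵥ u = v := by
    rw [hu, Matrix.mulVec_mulVec, hinv, Matrix.one_mulVec]
  have hsym : Bᵀ = B := hB.1
  have h0 : 0 ≤ (w - u) ⬝ᵥ (B *ᵥ (w - u)) := by
    simpa [star_trivial] using hB.posSemidef.dotProduct_mulVec_nonneg (w - u)
  have e1 : u ⬝ᵥ (B *ᵥ w) = v ⬝ᵥ w := by
    rw [Matrix.dotProduct_mulVec, ← Matrix.mulVec_transpose, hsym, hBu]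
  have e2 : w ⬝ᵥ (B *ᵥ u) = v ⬝ᵥ w := by
    rw [hBu, dotProduct_comm]
  have e3 : u ⬝ᵥ (B *ᵥ u) = v ⬝ᵥ (B⁻¹ *ᵥ v) := by
    rw [hBu, dotProduct_comm, hu]
  have expand : (w - u) ⬝ᵥ (B *ᵥ (w - u))
      = w ⬝ᵥ (B *ᵥ w) - v ⬝ᵥ w - v ⬝ᵥ w + v ⬝ᵥ (B⁻¹ *ᵥ v) := by
    rw [Matrix.mulVec_sub, sub_dotProduct, dotProduct_sub,
      dotProduct_sub, e1, e2, e3]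
    ring
  linarith [expand ▸ h0]

/-- Monotonicity of the Schur quadratic form in the index set. -/
lemma schurF_mono {m : ℕ} {A : Matrix (Fin m) (Fin m) ℝ} (hA : A.PosDef)
    {S T : Finset (Fin m)} (hST : S ⊆ T) (i : Fin m)
    (hSpd : (principalSub A S).PosDef) (hTpd : (principalSub A T).PosDef) :
    schurF A S i ≤ schurF A T i := by
  set AS := principalSub A S with hAS
  set AT := principalSub A T with hAT
  set cS : {x // x ∈ S} → ℝ := fun j => A j.1 i with hcS
  set cT : {x // x ∈ T} → ℝ := fun j => A j.1 i with hcT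
  set x : {x // x ∈ S} → ℝ := AS⁻¹ *ᵥ cS with hx
  set xt : Fin m → ℝ := fun j => if h : j ∈ S then x ⟨j, h⟩ else 0 with hxt
  set w : {x // x ∈ T} → ℝ := fun j => xt j.1 with hw
  have hxval : ∀ j : {x // x ∈ S}, xt j.1 = x j := fun j => dif_pos j.2
  have hASx : AS *ᵥ x = cS := by
    rw [hx, Matrix.mulVec_mulVec, Matrix.mul_nonsing_inv AS (Ne.isUnit hSpd.det_pos.ne'),
      Matrix.one_mulVec]
  have f1 : cT ⬝ᵥ w = schurF A S i := by
    have : cT ⬝ᵥ w = ∑ j : {x // x ∈ T}, (fun j' : Fin m => A j' i * xt j') j.1 := rfl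
    rw [this, Finset.sum_coe_sort T (fun j' : Fin m => A j' i * xt j'),
      ← Finset.sum_subset hST (by intro j _ hj; simp [hxt, hj]),
      ← Finset.sum_coe_sort S (fun j' : Fin m => A j' i * xt j')]
    show (∑ j : {x // x ∈ S}, A j.1 i * xt j.1) = schurF A S i
    rw [Finset.sum_congr rfl fun j _ => by rw [hxval j]]
    rfl
  have f2 : w ⬝ᵥ (AT *ᵥ w) = schurF A S i := by
    set q : Fin m → ℝ := fun j => ∑ k ∈ T, A j k * xt k with hq
    have hq' : ∀ j : {x // x ∈ T}, (AT *ᵥ w) j = q j.1 := by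
      intro j
      show (∑ k : {x // x ∈ T}, A j.1 k.1 * xt k.1) = q j.1
      rw [hq]
      exact Finset.sum_coe_sort T (fun k' : Fin m => A j.1 k' * xt k')
    have hqS : ∀ j ∈ S, q j = A j i := by
      intro j hj
      show (∑ k ∈ T, A j k * xt k) = A j i
      have : (∑ k ∈ T, A j k * xt k) = ∑ k ∈ S, A j k * xt k :=
        (Finset.sum_subset hST (by intro k _ hk; simp [hxt, hk])).symm
      rw [this, ← Finset.sum_coe_sort S (fun k' : Fin m => A j k' * xt k')]
      have : (∑ k : {x // x ∈ S}, A j k.1 * xt k.1) = (AS *ᵥ x) ⟨j, hj⟩ := by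
        show _ = ∑ k : {x // x ∈ S}, AS ⟨j, hj⟩ k * x k
        exact Finset.sum_congr rfl fun k _ => by rw [hxval k]; rfl
      rw [this, hASx]
    have : w ⬝ᵥ (AT *ᵥ w) = ∑ j : {x // x ∈ T}, (fun j' : Fin m => xt j' * q j') j.1 :=
      Finset.sum_congr rfl fun j _ => by rw [hq' j]
    rw [this, Finset.sum_coe_sort T (fun j' : Fin m => xt j' * q j'),
      ← Finset.sum_subset hST (by intro j _ hj; simp [hxt, hj]),
      ← Finset.sum_coe_sort S (fun j' : Fin m => xt j' * q j')]
    show (∑ j : {x // x ∈ S}, xt j.1 * q j.1) = schurF A S i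
    rw [Finset.sum_congr rfl fun j _ => by rw [hxval j, hqS j.1 j.2]]
    show (∑ j : {x // x ∈ S}, x j * A j.1 i) = schurF A S i
    rw [Finset.sum_congr rfl fun j _ => mul_comm (x j) (A j.1 i)]
    rfl
  have hb := quad_bound hTpd cT w
  rw [f1, f2] at hb
  have : schurF A T i = cT ⬝ᵥ (AT⁻¹ *ᵥ cT) := rfl
  rw [this]
  linarith

theorem logdet_principal_submodular {m : ℕ} (A : Matrix (Fin m) (Fin m) ℝ)
    (hA : A.PosDef) (S T : Finset (Fin m)) (hST : S ⊆ T) (i : Fin m) (hi : i ∉ T) :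
    Real.log (principalSub A (insert i T)).det - Real.log (principalSub A T).det ≤
      Real.log (principalSub A (insert i S)).det - Real.log (principalSub A S).det := by
  have hiS : i ∉ S := fun h => hi (hST h)
  have hSpd := principalSub_posDef hA S
  have hTpd := principalSub_posDef hA T
  have hiSpd := principalSub_posDef hA (insert i S)
  have hiTpd := principalSub_posDef hA (insert i T)
  have hdS := det_insert hA S i hiS hSpd
  have hdT := det_insert hA T i hi hTpd
  have hcSpos : 0 < A i i - schurF A S i := by
    have := hiSpd.det_pos
    rw [hdS] at this
    by_contra h
    push_neg at h
    nlinarith [hSpd.det_pos]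
  have hcTpos : 0 < A i i - schurF A T i := by
    have := hiTpd.det_pos
    rw [hdT] at this
    by_contra h
    push_neg at h
    nlinarith [hTpd.det_pos]
  have hmono := schurF_mono hA hST i hSpd hTpd
  have eS : Real.log (principalSub A (insert i S)).det - Real.log (principalSub A S).det
      = Real.log (A i i - schurF A S i) := by
    rw [hdS, Real.log_mul hSpd.det_pos.ne' hcSpos.ne']
    ring
  have eT : Real.log (principalSub A (insert i T)).det - Real.log (principalSub A T).det
      = Real.log (A i i - schurF A T i) := by
    rw [hdT, Real.log_mul hTpd.det_pos.ne' hcTpos.ne']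
    ring
  rw [eS, eT]
  exact Real.log_le_log hcTpos (by linarith)
end

section
/- Let f : 2^{[m]} → ℝ be a monotone nondecreasing submodular set function with f(∅) = 0, and let C_greedy be the set obtained by k steps of greedy maximization (each step adding an element of maximal marginal gain). Then f(C_greedy) ≥ (1 − 1/e) · max_{|C| = k} f(C). -/
/-!
Let `C` be any `k`-set and `g t` the greedy set after `t` steps. By monotonicity and
submodularity, `f C ≤ f (g t ∪ C)` is at most `f (g t)` plus the sum of the `k` marginal gains of
the elements of `C` over `g t`, each of which is at most the greedy gain. Hence the gap `f C - f (g t)` shrinks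
by a factor `1 - 1/k` per step, so after `k` steps it is at most `(1 - 1/k)^k f C ≤ e⁻¹ f C`.
-/

open Finset

section Submodular

variable {α : Type*} [DecidableEq α] {f : Finset α → ℝ}

theorem le_add_sum_marginal_gain (hmono : Monotone f)
    (hsub : ∀ S T : Finset α, S ⊆ T → ∀ i ∉ T, f (insert i T) - f T ≤ f (insert i S) - f S)
    (S A : Finset α) : f (S ∪ A) ≤ f S + ∑ y ∈ A, (f (insert y S) - f S) := by
  induction A using Finset.induction with
  | empty => simp
  | @insert a A ha ih =>
    rw [sum_insert ha, union_insert]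
    by_cases haSA : a ∈ S ∪ A
    · have hgain : f S ≤ f (insert a S) := hmono (subset_insert a S)
      rw [insert_eq_of_mem haSA]
      linarith
    · linarith [hsub S (S ∪ A) subset_union_left a haSA]

theorem sub_le_card_mul_greedy_gain (hmono : Monotone f)
    (hsub : ∀ S T : Finset α, S ⊆ T → ∀ i ∉ T, f (insert i T) - f T ≤ f (insert i S) - f S)
    {S : Finset α} {x : α} (hmax : ∀ y ∉ S, f (insert y S) ≤ f (insert x S)) (C : Finset α) :
    f C - f S ≤ #C * (f (insert x S) - f S) := by
  have hgain : ∀ y ∈ C, f (insert y S) - f S ≤ f (insert x S) - f S := by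
    intro y _
    by_cases hy : y ∈ S
    · rw [insert_eq_of_mem hy, sub_self, sub_nonneg]
      exact hmono (subset_insert x S)
    · linarith [hmax y hy]
  calc f C - f S ≤ f (S ∪ C) - f S := by linarith [hmono (subset_union_right : C ⊆ S ∪ C)]
    _ ≤ ∑ y ∈ C, (f (insert y S) - f S) := by linarith [le_add_sum_marginal_gain hmono hsub S C]
    _ ≤ ∑ _y ∈ C, (f (insert x S) - f S) := sum_le_sum hgain
    _ = #C * (f (insert x S) - f S) := by rw [sum_const, nsmul_eq_mul]

end Submodular

theorem le_one_sub_div_pow_mul {d : ℕ → ℝ} {k : ℕ} (h : ∀ t < k, d t ≤ k * (d t - d (t + 1))) :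
    ∀ t ≤ k, d t ≤ (1 - 1 / k) ^ t * d 0 := by
  intro t
  induction t with
  | zero => simp
  | succ t ih =>
    intro ht
    have hk1 : (1 : ℝ) ≤ k := by exact_mod_cast Nat.one_le_of_lt ht
    have hk : (0 : ℝ) < k := by linarith
    have hstep : d (t + 1) ≤ (1 - 1 / k) * d t := by
      rw [one_sub_div hk.ne', div_mul_eq_mul_div, le_div_iff₀ hk]
      linarith [h t ht]
    have hfactor : (0 : ℝ) ≤ 1 - 1 / k := sub_nonneg.mpr ((div_le_one hk).mpr hk1)
    calc d (t + 1) ≤ (1 - 1 / k) * d t := hstep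
      _ ≤ (1 - 1 / k) * ((1 - 1 / k) ^ t * d 0) :=
        mul_le_mul_of_nonneg_left (ih (Nat.le_of_succ_le ht)) hfactor
      _ = (1 - 1 / k) ^ (t + 1) * d 0 := by ring

theorem greedy_submodular_approximation {m : ℕ} (f : Finset (Fin m) → ℝ)
    (hmono : ∀ S T : Finset (Fin m), S ⊆ T → f S ≤ f T)
    (hsub : ∀ S T : Finset (Fin m), S ⊆ T → ∀ i ∉ T,
      f (insert i T) - f T ≤ f (insert i S) - f S)
    (hzero : f ∅ = 0)
    (k : ℕ) (g : ℕ → Finset (Fin m)) (hg0 : g 0 = ∅)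
    (hgreedy : ∀ t < k, ∃ x ∉ g t,
      g (t + 1) = insert x (g t) ∧
        ∀ y ∉ g t, f (insert y (g t)) ≤ f (insert x (g t))) :
    ∀ C : Finset (Fin m), C.card = k →
      (1 - (Real.exp 1)⁻¹) * f C ≤ f (g k) := by
  intro C hC
  have hmono' : Monotone f := fun S T h => hmono S T h
  obtain rfl | hk := Nat.eq_zero_or_pos k
  · simp [card_eq_zero.mp hC, hg0, hzero]
  have hstep : ∀ t < k, f C - f (g t) ≤ k * ((f C - f (g t)) - (f C - f (g (t + 1)))) := by
    intro t ht
    obtain ⟨x, -, hx, hmax⟩ := hgreedy t ht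
    rw [sub_sub_sub_cancel_left, hx, ← hC]
    exact sub_le_card_mul_greedy_gain hmono' hsub hmax C
  have hdecay := le_one_sub_div_pow_mul hstep k le_rfl
  rw [hg0, hzero, sub_zero] at hdecay
  have hfC : 0 ≤ f C := hzero ▸ hmono' (empty_subset C)
  have hpow := Real.one_sub_div_pow_le_exp_neg (n := k) (t := 1) (by exact_mod_cast hk)
  calc (1 - (Real.exp 1)⁻¹) * f C ≤ (1 - (1 - 1 / k) ^ k) * f C := by
        rw [← Real.exp_neg]; gcongr
    _ ≤ f (g k) := by linarith
end
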